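/- arXiv:1805.04677 — 2 statements merged into one kernel-verified Lean document; each statement's English description precedes it below -/
import Mathlib

section
/- For every a ∈ ℝ² in the interior of the fourth quadrant (a₁ > 0 and a₂ < 0) and every integer k ≥ 2, the set X_k(Σ₁, a) ∩ (int Q₂ ∪ int Q₄) — i.e., the set of points of X_k(Σ₁, a) lying in the interior of the second or fourth quadrant — contains no more than 4k + 4 points, where Σ₁ = {A₁, A₂}. -/
open Matrix Set

noncomputable section

/-- `XSeq S a k` is the set of all vectors `T_{k-1} ⋯ T_0 · a` with each `T_j ∈ S`
(and `XSeq S a 0 = {a}`). -/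
def XSeq {n : ℕ} (S : Set (Matrix (Fin n) (Fin n) ℝ)) (a : Fin n → ℝ) : ℕ → Set (Fin n → ℝ)
  | 0 => {a}
  | k + 1 => ⋃ A ∈ S, A.mulVec '' XSeq S a k

/-- `PHull S a k` is the convex hull of `XSeq S a k`. -/
def PHull {n : ℕ} (S : Set (Matrix (Fin n) (Fin n) ℝ)) (a : Fin n → ℝ) (k : ℕ) :
    Set (Fin n → ℝ) :=
  convexHull ℝ (XSeq S a k)

/-- `EPts S a k` is the set of extreme points of `PHull S a k`. -/
def EPts {n : ℕ} (S : Set (Matrix (Fin n) (Fin n) ℝ)) (a : Fin n → ℝ) (k : ℕ) :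
    Set (Fin n → ℝ) :=
  Set.extremePoints ℝ (PHull S a k)

/-- `NExt S a k` is the number of extreme points of `PHull S a k`. -/
def NExt {n : ℕ} (S : Set (Matrix (Fin n) (Fin n) ℝ)) (a : Fin n → ℝ) (k : ℕ) : ℕ :=
  (EPts S a k).ncard

def M1 : Matrix (Fin 2) (Fin 2) ℝ := !![0, 1; 1, 0]
def M2 : Matrix (Fin 2) (Fin 2) ℝ := !![1, 1; 0, 1]
def M3 : Matrix (Fin 2) (Fin 2) ℝ := !![1, 0; 1, 1]
def M4 : Matrix (Fin 2) (Fin 2) ℝ := !![1, 1; 1, 0]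
def M5 : Matrix (Fin 2) (Fin 2) ℝ := !![0, 1; 1, 1]

/-- Interior of the first quadrant. -/
def intQ1 : Set (Fin 2 → ℝ) := {c | 0 < c 0 ∧ 0 < c 1}
/-- Interior of the second quadrant. -/
def intQ2 : Set (Fin 2 → ℝ) := {c | c 0 < 0 ∧ 0 < c 1}
/-- Interior of the third quadrant. -/
def intQ3 : Set (Fin 2 → ℝ) := {c | c 0 < 0 ∧ c 1 < 0}
/-- Interior of the fourth quadrant. -/
def intQ4 : Set (Fin 2 → ℝ) := {c | 0 < c 0 ∧ c 1 < 0}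

/-! On the absolute values of its coordinates, `M1` is a swap and `M2` is `(u, v) ↦ (u + v, v)`.
If both `y` and `M2 y` have coordinates of opposite signs, then `|y 1| < |y 0|` and `M2` replaces
`|y 0|` by `|y 0| - |y 1|`: one step of the subtractive Euclidean algorithm. Points of opposite signs
are never produced from points of equal signs, so every such point of `X_k(Σ₁, a)` has its pair of
absolute values among the first `k + 1` terms of the Euclidean sequence of `(|a 0|, |a 1|)`, up to
order, and each term accounts for at most four points. -/

def OppSigns (x : Fin 2 → ℝ) : Prop := x 0 * x 1 < 0

def absPair (x : Fin 2 → ℝ) : ℝ × ℝ := (|x 0|, |x 1|)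

def euclidStep (c : ℝ × ℝ) : ℝ × ℝ := (|c.1 - c.2|, min c.1 c.2)

def oppSignVectors (c : ℝ × ℝ) : Finset (Fin 2 → ℝ) :=
  {![c.1, -c.2], ![-c.1, c.2], ![c.2, -c.1], ![-c.2, c.1]}

theorem mem_intQ2_union_intQ4 {x : Fin 2 → ℝ} : x ∈ intQ2 ∪ intQ4 ↔ OppSigns x := by
  rw [OppSigns, mul_neg_iff, or_comm]
  rfl

theorem euclidStep_swap (c : ℝ × ℝ) : euclidStep c.swap = euclidStep c := by
  simp only [euclidStep, Prod.fst_swap, Prod.snd_swap, abs_sub_comm, min_comm]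

theorem M1_mulVec (y : Fin 2 → ℝ) : M1 *ᵥ y = ![y 1, y 0] := by
  ext i; fin_cases i <;> simp [M1, mulVec, dotProduct, Fin.sum_univ_two]

theorem M2_mulVec (y : Fin 2 → ℝ) : M2 *ᵥ y = ![y 0 + y 1, y 1] := by
  ext i; fin_cases i <;> simp [M2, mulVec, dotProduct, Fin.sum_univ_two]

theorem oppSigns_M1_mulVec {y : Fin 2 → ℝ} : OppSigns (M1 *ᵥ y) ↔ OppSigns y := by
  rw [OppSigns, OppSigns, M1_mulVec]
  simp [mul_comm]

theorem absPair_M1_mulVec (y : Fin 2 → ℝ) : absPair (M1 *ᵥ y) = (absPair y).swap := by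
  rw [absPair, absPair, M1_mulVec]
  simp

theorem OppSigns.of_M2_mulVec {y : Fin 2 → ℝ} (h : OppSigns (M2 *ᵥ y)) : OppSigns y := by
  simp only [OppSigns, M2_mulVec, Matrix.cons_val_zero, Matrix.cons_val_one] at h ⊢
  nlinarith [mul_self_nonneg (y 1)]

theorem absPair_M2_mulVec {y : Fin 2 → ℝ} (hy : OppSigns y) (h : OppSigns (M2 *ᵥ y)) :
    absPair (M2 *ᵥ y) = euclidStep (absPair y) := by
  simp only [OppSigns, M2_mulVec, Matrix.cons_val_zero, Matrix.cons_val_one] at hy h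
  simp only [absPair, euclidStep, M2_mulVec, Matrix.cons_val_zero, Matrix.cons_val_one,
    Prod.mk.injEq]
  rcases mul_neg_iff.mp hy with ⟨h0, h1⟩ | ⟨h0, h1⟩
  · have hsum : 0 < y 0 + y 1 := pos_of_mul_neg_left h h1.le
    rw [abs_of_pos h0, abs_of_neg h1, abs_of_pos hsum, abs_of_pos (by linarith),
      min_eq_right (by linarith)]
    exact ⟨by ring, rfl⟩
  · have hsum : y 0 + y 1 < 0 := neg_of_mul_neg_left h h1.le
    rw [abs_of_neg h0, abs_of_pos h1, abs_of_neg hsum, abs_of_pos (by linarith),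
      min_eq_right (by linarith)]
    exact ⟨by ring, rfl⟩

theorem mem_oppSignVectors {x : Fin 2 → ℝ} {c : ℝ × ℝ} (hx : OppSigns x)
    (h : absPair x = c ∨ absPair x = c.swap) : x ∈ oppSignVectors c := by
  have hx_eq : x = ![x 0, x 1] := by ext i; fin_cases i <;> rfl
  have hc : c = absPair x ∨ c = (absPair x).swap :=
    h.imp Eq.symm fun h => by rw [h, Prod.swap_swap]
  rcases mul_neg_iff.mp hx with ⟨h0, h1⟩ | ⟨h0, h1⟩ <;>
  rcases hc with rfl | rfl <;>
  simp [oppSignVectors, absPair, abs_of_pos, abs_of_neg, h0, h1, hx_eq.symm]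

theorem exists_absPair_eq_euclidStep_iterate (a : Fin 2 → ℝ) (k : ℕ) :
    ∀ x ∈ XSeq {M1, M2} a k, OppSigns x → ∃ j ≤ k,
      absPair x = euclidStep^[j] (absPair a) ∨ absPair x = (euclidStep^[j] (absPair a)).swap := by
  induction k with
  | zero =>
    rintro x rfl -
    exact ⟨0, le_rfl, Or.inl rfl⟩
  | succ k ih =>
    intro x hx hxs
    simp only [XSeq, mem_iUnion, mem_image, mem_insert_iff, mem_singleton_iff] at hx
    obtain ⟨A, rfl | rfl, y, hy, rfl⟩ := hx
    · obtain ⟨j, hj, hyc⟩ := ih y hy (oppSigns_M1_mulVec.mp hxs)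
      refine ⟨j, hj.trans k.le_succ, ?_⟩
      rw [absPair_M1_mulVec]
      rcases hyc with h | h <;> simp [h]
    · have hys := hxs.of_M2_mulVec
      obtain ⟨j, hj, hyc⟩ := ih y hy hys
      refine ⟨j + 1, by omega, Or.inl ?_⟩
      rw [absPair_M2_mulVec hys hxs, Function.iterate_succ_apply']
      rcases hyc with h | h <;> simp [h, euclidStep_swap]

def euclidOrbitVectors (a : Fin 2 → ℝ) (k : ℕ) : Finset (Fin 2 → ℝ) :=
  (Finset.range (k + 1)).biUnion fun j => oppSignVectors (euclidStep^[j] (absPair a))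

theorem card_euclidOrbitVectors_le (a : Fin 2 → ℝ) (k : ℕ) :
    (euclidOrbitVectors a k).card ≤ 4 * k + 4 := by
  have h := Finset.card_biUnion_le_card_mul (Finset.range (k + 1))
    (fun j => oppSignVectors (euclidStep^[j] (absPair a))) 4 fun _ _ => Finset.card_le_four
  rw [Finset.card_range] at h
  rw [euclidOrbitVectors]
  linarith

theorem oppSigns_XSeq_subset (a : Fin 2 → ℝ) (k : ℕ) :
    {x ∈ XSeq {M1, M2} a k | OppSigns x} ⊆ euclidOrbitVectors a k := by
  rintro x ⟨hx, hxs⟩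
  obtain ⟨j, hj, hxc⟩ := exists_absPair_eq_euclidStep_iterate a k x hx hxs
  simp only [euclidOrbitVectors, Finset.coe_biUnion, Finset.coe_range, mem_Iio, mem_iUnion,
    Finset.mem_coe]
  exact ⟨j, Nat.lt_succ_of_le hj, mem_oppSignVectors hxs hxc⟩

theorem stmt13_general (a : Fin 2 → ℝ) (k : ℕ) :
    (XSeq {M1, M2} a k ∩ (intQ2 ∪ intQ4)).ncard ≤ 4 * k + 4 := by
  have hsub : XSeq {M1, M2} a k ∩ (intQ2 ∪ intQ4) ⊆ euclidOrbitVectors a k :=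
    fun x ⟨hx, hq⟩ => oppSigns_XSeq_subset a k ⟨hx, mem_intQ2_union_intQ4.mp hq⟩
  calc (XSeq {M1, M2} a k ∩ (intQ2 ∪ intQ4)).ncard
      ≤ (euclidOrbitVectors a k : Set (Fin 2 → ℝ)).ncard :=
        Set.ncard_le_ncard hsub (Finset.finite_toSet _)
    _ = (euclidOrbitVectors a k).card := Set.ncard_coe_finset _
    _ ≤ 4 * k + 4 := card_euclidOrbitVectors_le a k

/-- For `a` in the interior of the fourth quadrant and `k ≥ 2`, the set of points of
`X_k(Σ₁, a)` lying in the open second or fourth quadrant has at most `4k + 4` elements. -/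
theorem stmt13 (a : Fin 2 → ℝ) (ha : 0 < a 0 ∧ a 1 < 0) (k : ℕ) (hk : 2 ≤ k) :
    (XSeq {M1, M2} a k ∩ (intQ2 ∪ intQ4)).ncard ≤ 4 * k + 4 :=
  stmt13_general a k

end
end

section
/- For every a ∈ ℝ² and every integer k ≥ 2, N_k(Σ₂, a) ≤ 8k − 12, where Σ₂ = {A₁, A₄}; consequently there exist α > 0 and a natural number k₀ such that N_k(Σ₂, a) ≤ α·k for all a ∈ ℝ² and all integers k ≥ k₀. -/
open Matrix Set

noncomputable section

/-!
Since `A₄ = S A₁` for the shear `S (x, y) = (x + y, y)`, we have `X_{k+1} = Y ∪ S Y` with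
`Y = A₁ X_k`, and `A₁` maps the extreme points of `P_k` bijectively onto those of `conv Y`.
An extreme point of `conv (Y ∪ S Y)` is an extreme point of `conv Y`, or `S u` for an extreme
point `u` of `conv Y` that is lost in `conv (Y ∪ S Y)`, or `S u` for a surviving extreme point `u`
with `S u ≠ u`. There are at most two `u` of the last kind: for each, `[u, S u]` is the whole
horizontal chord of the hull at height `u₂ ≠ 0`, and its signed length is `u₂`. If the height of
one such `u` lay between those of two others, the corresponding convex combination of their
chords would be a chord of signed length `u₂` at height `u₂`, hence equal to `[u, S u]`, and `u`
would lie on the segment joining the other two. So `N_{k+1} ≤ N_k + 2`, and with `N_1 ≤ 2` this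
gives `N_k ≤ 2k ≤ 8k - 12`.
-/

section LinearEquiv

variable {V : Type*} [AddCommGroup V] [Module ℝ V]

theorem extremePoints_convexHull_image (e : V ≃ₗ[ℝ] V) (X : Set V) :
    (convexHull ℝ (e '' X)).extremePoints ℝ = e '' (convexHull ℝ X).extremePoints ℝ := by
  rw [image_extremePoints]
  exact congrArg _ (e.toLinearMap.image_convexHull X).symm

theorem ncard_extremePoints_convexHull_image (e : V ≃ₗ[ℝ] V) (X : Set V) :
    ((convexHull ℝ (e '' X)).extremePoints ℝ).ncard =
      ((convexHull ℝ X).extremePoints ℝ).ncard := by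
  rw [extremePoints_convexHull_image, Set.ncard_image_of_injective _ e.injective]

def movedExtremePoints (e : V ≃ₗ[ℝ] V) (P : Set V) : Set V :=
  {v | v ∈ P.extremePoints ℝ ∧ e v ∈ P.extremePoints ℝ ∧ e v ≠ v}

theorem extremePoints_convexHull_union_image_subset (e : V ≃ₗ[ℝ] V) (Y : Set V) :
    let P := convexHull ℝ (Y ∪ e '' Y)
    let E := (convexHull ℝ Y).extremePoints ℝ
    P.extremePoints ℝ ⊆
      (E ∩ P.extremePoints ℝ) ∪ e '' (E \ P.extremePoints ℝ) ∪ e '' movedExtremePoints e P := by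
  intro P E x hx
  have hsub : ∀ Z ⊆ Y ∪ e '' Y, x ∈ Z → x ∈ (convexHull ℝ Z).extremePoints ℝ := fun Z hZ hxZ ↦
    inter_extremePoints_subset_extremePoints_of_subset (convexHull_mono hZ)
      ⟨subset_convexHull ℝ Z hxZ, hx⟩
  rcases extremePoints_convexHull_subset hx with hxY | hxeY
  · exact Or.inl (Or.inl ⟨hsub Y Set.subset_union_left hxY, hx⟩)
  · have := hsub _ Set.subset_union_right hxeY
    rw [extremePoints_convexHull_image] at this
    obtain ⟨u, huE, rfl⟩ := this
    by_cases heu : e u ∈ E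
    · exact Or.inl (Or.inl ⟨heu, hx⟩)
    by_cases hu : u ∈ P.extremePoints ℝ
    · exact Or.inr ⟨u, ⟨hu, hx, fun h ↦ heu (h.symm ▸ huE)⟩, rfl⟩
    · exact Or.inl (Or.inr ⟨u, ⟨huE, hu⟩, rfl⟩)

theorem ncard_extremePoints_convexHull_union_image_le (e : V ≃ₗ[ℝ] V) {Y : Set V}
    (hY : Y.Finite) :
    ((convexHull ℝ (Y ∪ e '' Y)).extremePoints ℝ).ncard ≤
      ((convexHull ℝ Y).extremePoints ℝ).ncard +
        (movedExtremePoints e (convexHull ℝ (Y ∪ e '' Y))).ncard := by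
  set H := (convexHull ℝ (Y ∪ e '' Y)).extremePoints ℝ
  set E := (convexHull ℝ Y).extremePoints ℝ
  set D := movedExtremePoints e (convexHull ℝ (Y ∪ e '' Y))
  have hE : E.Finite := hY.subset extremePoints_convexHull_subset
  have hD : D.Finite :=
    (hY.union (hY.image e)).subset fun _ hv ↦ extremePoints_convexHull_subset hv.1
  calc H.ncard
      ≤ ((E ∩ H) ∪ e '' (E \ H) ∪ e '' D).ncard :=
        Set.ncard_le_ncard (extremePoints_convexHull_union_image_subset e Y)
          (((hE.inter_of_left H).union (hE.sdiff.image e)).union (hD.image e))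
    _ ≤ (E ∩ H).ncard + (E \ H).ncard + D.ncard := by
        grw [Set.ncard_union_le, Set.ncard_union_le, Set.ncard_image_of_injective _ e.injective,
          Set.ncard_image_of_injective _ e.injective]
    _ = E.ncard + D.ncard := by rw [Set.ncard_inter_add_ncard_sdiff_eq_ncard E H hE]

end LinearEquiv

local notation "ℝ²" => Fin 2 → ℝ

theorem M2_mul_inv : M2 * !![1, -1; 0, 1] = 1 := by
  ext i j; fin_cases i <;> fin_cases j <;> simp [M2]

theorem inv_mul_M2 : !![1, -1; 0, 1] * M2 = 1 := by
  ext i j; fin_cases i <;> fin_cases j <;> simp [M2]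

def shear : ℝ² ≃ₗ[ℝ] ℝ² := Matrix.toLin'OfInv inv_mul_M2 M2_mul_inv

theorem shear_apply (v : ℝ²) : shear v = M2 *ᵥ v := rfl

@[simp]
theorem shear_apply_zero (v : ℝ²) : shear v 0 = v 0 + v 1 := by
  simp [shear_apply, M2, mulVec, dotProduct, Fin.sum_univ_two]

@[simp]
theorem shear_apply_one (v : ℝ²) : shear v 1 = v 1 := by
  simp [shear_apply, M2, mulVec, dotProduct, Fin.sum_univ_two]

theorem apply_one_ne_zero_of_shear_ne {v : ℝ²} (h : shear v ≠ v) : v 1 ≠ 0 := by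
  refine fun h0 ↦ h (funext fun i ↦ ?_)
  fin_cases i <;> simp [h0]

theorem mem_openSegment_of_lt_of_lt {p q r : ℝ²} (hpq : p 1 = q 1) (hrq : r 1 = q 1)
    (hp : p 0 < q 0) (hr : q 0 < r 0) : q ∈ openSegment ℝ p r := by
  have hd : 0 < r 0 - p 0 := by linarith
  refine ⟨(r 0 - q 0) / (r 0 - p 0), (q 0 - p 0) / (r 0 - p 0), div_pos (by linarith) hd,
    div_pos (by linarith) hd, by field_simp; ring, funext <| Fin.forall_fin_two.2 ⟨?_, ?_⟩⟩
  all_goals simp only [Pi.add_apply, Pi.smul_apply, smul_eq_mul, hpq, hrq]; field_simp; ring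

theorem notMem_extremePoints_of_lt_of_lt {P : Set ℝ²} {p q r : ℝ²} (hpP : p ∈ P) (hrP : r ∈ P)
    (hpq : p 1 = q 1) (hrq : r 1 = q 1) (hp : p 0 < q 0) (hr : q 0 < r 0) :
    q ∉ P.extremePoints ℝ := fun hq ↦
  hp.ne (congrFun (hq.2 hpP hrP (mem_openSegment_of_lt_of_lt hpq hrq hp hr)) 0)

/-- `v` and `shear v` are the two ends of the horizontal chord of `P` at height `v 1`, so a
chord `[u, shear u]` at that height, of the same signed length, must be this one. -/
theorem eq_of_shear_mem_extremePoints {P : Set ℝ²} {u v : ℝ²} (hv : v ∈ P.extremePoints ℝ)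
    (hsv : shear v ∈ P.extremePoints ℝ) (hu : u ∈ P) (hsu : shear u ∈ P) (h : u 1 = v 1)
    (hv0 : v 1 ≠ 0) : u = v := by
  suffices h0 : u 0 = v 0 from funext <| Fin.forall_fin_two.2 ⟨h0, h⟩
  by_contra hne
  rcases hv0.lt_or_gt with ht | ht <;> rcases lt_or_gt_of_ne hne with hlt | hlt
  · exact notMem_extremePoints_of_lt_of_lt hsu hv.1 (by simp [h]) (by simp)
      (by simp only [shear_apply_zero, h]; linarith) (by simp only [shear_apply_zero]; linarith) hsv
  · exact notMem_extremePoints_of_lt_of_lt hsv.1 hu (by simp) h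
      (by simp only [shear_apply_zero]; linarith) (by linarith) hv
  · exact notMem_extremePoints_of_lt_of_lt hu hsv.1 h (by simp)
      hlt (by simp only [shear_apply_zero]; linarith) hv
  · exact notMem_extremePoints_of_lt_of_lt hv.1 hsu (by simp) (by simp [h])
      (by simp only [shear_apply_zero]; linarith) (by simp only [shear_apply_zero, h]; linarith) hsv

theorem eq_or_eq_of_apply_one_mem_segment {P : Set ℝ²} (hP : Convex ℝ P) {v w₁ w₂ : ℝ²}
    (hv : v ∈ P.extremePoints ℝ) (hsv : shear v ∈ P.extremePoints ℝ) (hv0 : v 1 ≠ 0)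
    (hw₁ : w₁ ∈ P) (hsw₁ : shear w₁ ∈ P) (hw₂ : w₂ ∈ P) (hsw₂ : shear w₂ ∈ P)
    (hseg : v 1 ∈ segment ℝ (w₁ 1) (w₂ 1)) : w₁ = v ∨ w₂ = v := by
  obtain ⟨a, b, ha, hb, hab, hv1⟩ := hseg
  have hw : a • w₁ + b • w₂ = v := by
    refine eq_of_shear_mem_extremePoints hv hsv (hP hw₁ hw₂ ha hb hab) ?_ (by simpa using hv1) hv0
    rw [map_add, map_smul, map_smul]
    exact hP hsw₁ hsw₂ ha hb hab
  exact (mem_extremePoints_iff_forall_segment.1 hv).2 w₁ hw₁ w₂ hw₂ ⟨a, b, ha, hb, hab, hw⟩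

theorem ncard_movedExtremePoints_shear_le_two {P : Set ℝ²} (hP : Convex ℝ P) :
    (movedExtremePoints shear P).ncard ≤ 2 := by
  by_contra! h
  obtain ⟨x, hx, y, hy, z, hz, hxy, hxz, hyz⟩ :=
    (Set.two_lt_ncard (Set.finite_of_ncard_pos (by omega))).1 h
  have key : ∀ {v w₁ w₂}, v ∈ movedExtremePoints shear P → w₁ ∈ movedExtremePoints shear P →
      w₂ ∈ movedExtremePoints shear P → v 1 ∈ Set.uIcc (w₁ 1) (w₂ 1) → w₁ = v ∨ w₂ = v :=
    fun hv hw₁ hw₂ hseg ↦ eq_or_eq_of_apply_one_mem_segment hP hv.1 hv.2.1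
      (apply_one_ne_zero_of_shear_ne hv.2.2) hw₁.1.1 hw₁.2.1.1 hw₂.1.1 hw₂.2.1.1
      (by rwa [segment_eq_uIcc])
  have hmid : x 1 ∈ Set.uIcc (y 1) (z 1) ∨ y 1 ∈ Set.uIcc (x 1) (z 1) ∨
      z 1 ∈ Set.uIcc (x 1) (y 1) := by
    simp only [Set.mem_uIcc]
    rcases le_total (x 1) (y 1) with h₁ | h₁ <;> rcases le_total (y 1) (z 1) with h₂ | h₂ <;>
      rcases le_total (x 1) (z 1) with h₃ | h₃ <;> tauto
  rcases hmid with hm | hm | hm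
  · exact (key hx hy hz hm).elim hxy.symm hxz.symm
  · exact (key hy hx hz hm).elim hxy hyz.symm
  · exact (key hz hx hy hm).elim hxz hyz

theorem M1_mul_self : M1 * M1 = 1 := by
  ext i j; fin_cases i <;> fin_cases j <;> simp [M1]

def coordSwap : ℝ² ≃ₗ[ℝ] ℝ² := Matrix.toLin'OfInv M1_mul_self M1_mul_self

theorem M4_eq_M2_mul_M1 : M4 = M2 * M1 := by
  ext i j; fin_cases i <;> fin_cases j <;> simp [M1, M2, M4]

theorem XSeq_succ_pair {n : ℕ} (A B : Matrix (Fin n) (Fin n) ℝ) (a : Fin n → ℝ) (k : ℕ) :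
    XSeq {A, B} a (k + 1) = A.mulVec '' XSeq {A, B} a k ∪ B.mulVec '' XSeq {A, B} a k :=
  Set.biUnion_pair A B _

theorem XSeq_finite {n : ℕ} {S : Set (Matrix (Fin n) (Fin n) ℝ)} (hS : S.Finite)
    (a : Fin n → ℝ) (k : ℕ) : (XSeq S a k).Finite := by
  induction k with
  | zero => exact Set.finite_singleton a
  | succ k ih => exact hS.biUnion fun A _ ↦ ih.image _

theorem NExt_le_ncard_XSeq {n : ℕ} {S : Set (Matrix (Fin n) (Fin n) ℝ)} {a : Fin n → ℝ}
    {k : ℕ} (hX : (XSeq S a k).Finite) : NExt S a k ≤ (XSeq S a k).ncard :=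
  Set.ncard_le_ncard extremePoints_convexHull_subset hX

theorem XSeq_M1_M4_succ (a : ℝ²) (k : ℕ) :
    XSeq {M1, M4} a (k + 1) =
      coordSwap '' XSeq {M1, M4} a k ∪ shear '' (coordSwap '' XSeq {M1, M4} a k) := by
  rw [XSeq_succ_pair, ← Set.image_comp, M4_eq_M2_mul_M1]
  congr 1
  exact Set.image_congr fun v _ ↦ (mulVec_mulVec v M2 M1).symm

theorem NExt_M1_M4_succ_le (a : ℝ²) (k : ℕ) :
    NExt {M1, M4} a (k + 1) ≤ NExt {M1, M4} a k + 2 := by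
  have hX : (coordSwap '' XSeq {M1, M4} a k).Finite :=
    (XSeq_finite (Set.toFinite _) a k).image _
  unfold NExt EPts PHull
  rw [XSeq_M1_M4_succ, ← ncard_extremePoints_convexHull_image coordSwap (XSeq {M1, M4} a k)]
  exact (ncard_extremePoints_convexHull_union_image_le shear hX).trans
    (Nat.add_le_add_left (ncard_movedExtremePoints_shear_le_two (convex_convexHull ℝ _)) _)

theorem NExt_M1_M4_one_le (a : ℝ²) : NExt {M1, M4} a 1 ≤ 2 := by
  have hX : XSeq {M1, M4} a 1 = {M1 *ᵥ a, M4 *ᵥ a} := by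
    rw [XSeq_succ_pair]
    simp only [XSeq, Set.image_singleton, Set.singleton_union]
  calc NExt {M1, M4} a 1
      ≤ (XSeq {M1, M4} a 1).ncard := NExt_le_ncard_XSeq (XSeq_finite (Set.toFinite _) a 1)
    _ ≤ 2 := by
      rw [hX]
      exact (Set.ncard_insert_le _ _).trans (by rw [Set.ncard_singleton])

theorem NExt_M1_M4_le_two_mul (a : ℝ²) {k : ℕ} (hk : 1 ≤ k) : NExt {M1, M4} a k ≤ 2 * k := by
  induction k, hk using Nat.le_induction with
  | base => exact NExt_M1_M4_one_le a
  | succ k _ ih => linarith [NExt_M1_M4_succ_le a k]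

/-- `N_k(Σ₂, a) ≤ 8k - 12` for all `a` and `k ≥ 2`, where `Σ₂ = {A₁, A₄}`; consequently
`N_k(Σ₂, a) = O(k)` uniformly in `a`. -/
theorem stmt15 :
    (∀ a : Fin 2 → ℝ, ∀ k : ℕ, 2 ≤ k → NExt {M1, M4} a k ≤ 8 * k - 12) ∧
    (∃ α : ℝ, 0 < α ∧ ∃ k₀ : ℕ, ∀ a : Fin 2 → ℝ, ∀ k : ℕ, k₀ ≤ k →
      (NExt {M1, M4} a k : ℝ) ≤ α * (k : ℝ)) := by
  refine ⟨fun a k hk ↦ ?_, 2, two_pos, 1, fun a k hk ↦ ?_⟩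
  · have := NExt_M1_M4_le_two_mul a (by omega : 1 ≤ k)
    omega
  · exact_mod_cast NExt_M1_M4_le_two_mul a hk

end
end
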